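/- arXiv:0910.3204 — 2 statements merged into one kernel-verified Lean document; each statement's English description precedes it below -/
import Mathlib

section
/- The linearized operator L applied to Q^{5/2} satisfies L(Q^{5/2}) = -(21/4)·Q^{5/2}, i.e. Q^{5/2} is an eigenfunction of L with eigenvalue -21/4. -/
noncomputable def Q : ℝ → ℝ := fun x => (5/2 : ℝ) ^ ((1:ℝ)/3) * (Real.cosh (3*x/2)) ^ (-(2:ℝ)/3)

noncomputable def L (f : ℝ → ℝ) : ℝ → ℝ := fun x => -(deriv (deriv f)) x + f x - 4 * (Q x)^3 * f x

/-!
Both `Q ^ r` and `Q ^ 3` are constant multiples of powers of `C = cosh (3x/2)`, and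
`(C ^ p)'' = (9/4) (p² C ^ p - p (p - 1) C ^ (p - 2))` because `sinh² = cosh² - 1`. Since
`4 Q³ = 10 C⁻²`, this gives `L (C ^ p) = (1 - 9p²/4) C ^ p + (9p(p - 1)/4 - 10) C ^ (p - 2)`.
For `Q ^ (5/2)`, i.e. `p = -5/3`, the coefficient of `C ^ (p - 2)` vanishes and
`1 - 9p²/4 = -21/4`.
-/

open Real

lemma hasDerivAt_cosh_mul_rpow (k p x : ℝ) :
    HasDerivAt (fun y => cosh (k * y) ^ p) (p * k * sinh (k * x) * cosh (k * x) ^ (p - 1)) x := by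
  have h := ((hasDerivAt_id x).const_mul k).cosh.rpow_const (p := p) (Or.inl (cosh_pos _).ne')
  simp only [id, mul_one] at h
  exact h.congr_deriv (by ring)

lemma deriv_deriv_cosh_mul_rpow (k p x : ℝ) :
    deriv (deriv fun y => cosh (k * y) ^ p) x =
      k ^ 2 * (p ^ 2 * cosh (k * x) ^ p - p * (p - 1) * cosh (k * x) ^ (p - 2)) := by
  have hc := cosh_pos (k * x)
  have hsinh : HasDerivAt (fun y => sinh (k * y)) (k * cosh (k * x)) x := by
    simpa [mul_comm] using ((hasDerivAt_id x).const_mul k).sinh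
  rw [funext fun y => (hasDerivAt_cosh_mul_rpow k p y).deriv]
  have h := ((hsinh.const_mul (p * k)).mul (hasDerivAt_cosh_mul_rpow k (p - 1) x))
  rw [← mul_assoc] at h
  refine h.deriv.trans ?_
  have e1 : cosh (k * x) * cosh (k * x) ^ (p - 1) = cosh (k * x) ^ p := by
    conv_lhs => enter [1]; rw [← rpow_one (cosh (k * x))]
    rw [← rpow_add hc]; ring_nf
  have e2 : cosh (k * x) ^ (2 : ℕ) * cosh (k * x) ^ (p - 1 - 1) = cosh (k * x) ^ p := by
    rw [← rpow_natCast, ← rpow_add hc]; ring_nf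
  have hsq : sinh (k * x) ^ 2 = cosh (k * x) ^ 2 - 1 := sinh_sq _
  rw [show p - 2 = p - 1 - 1 by ring]
  linear_combination p * k ^ 2 * (e1 + (p - 1) * (cosh (k * x) ^ (p - 1 - 1) * hsq + e2))

lemma Q_rpow (r x : ℝ) :
    Q x ^ r = (5/2 : ℝ) ^ (r / 3) * cosh (3 * x / 2) ^ (-(2 * r / 3)) := by
  have hc := cosh_pos (3 * x / 2)
  unfold Q
  rw [mul_rpow (by positivity) (by positivity), ← rpow_mul (by norm_num), ← rpow_mul hc.le]
  ring_nf

lemma Q_pow_three (x : ℝ) : Q x ^ 3 = 5 / 2 * cosh (3 * x / 2) ^ (-2 : ℝ) := by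
  rw [← rpow_natCast, Q_rpow]; norm_num

lemma L_const_mul (a : ℝ) (f : ℝ → ℝ) (x : ℝ) : L (fun y => a * f y) x = a * L f x := by
  simp only [L, deriv_const_mul_field']
  ring

lemma L_cosh_rpow (p x : ℝ) :
    L (fun y => cosh (3 * y / 2) ^ p) x =
      (1 - 9 / 4 * p ^ 2) * cosh (3 * x / 2) ^ p
        + (9 / 4 * p * (p - 1) - 10) * cosh (3 * x / 2) ^ (p - 2) := by
  have hprod : cosh (3 * x / 2) ^ (-2 : ℝ) * cosh (3 * x / 2) ^ p = cosh (3 * x / 2) ^ (p - 2) := by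
    rw [← rpow_add (cosh_pos _)]; ring_nf
  have harg (y : ℝ) : 3 * y / 2 = 3 / 2 * y := by ring
  simp only [L, Q_pow_three, harg] at hprod ⊢
  rw [deriv_deriv_cosh_mul_rpow]
  linear_combination (-10) * hprod

theorem L_eigen_Q52 :
    ∀ x : ℝ, L (fun y => (Q y) ^ ((5:ℝ)/2)) x = -(21/4) * (Q x) ^ ((5:ℝ)/2) := by
  intro x
  simp only [Q_rpow, L_const_mul, L_cosh_rpow]
  norm_num
  ring
end

section
/- Define P(x) = Q'(x)/Q(x) - 1 + 2·10^{-1/3} e^{x} Q(x). Then there exists C > 0 such that |P(x)| ≤ C e^{-2|x|} for all x ∈ ℝ. -/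
noncomputable def P : ℝ → ℝ :=
  fun x => deriv Q x / Q x - 1 + 2 * (10:ℝ) ^ (-(1:ℝ)/3) * Real.exp x * Q x

/-!
With `u = exp (-3x)` one has `Q'/Q = -tanh (3x/2) = 1 - 2/(1+u)` and `10^(-1/3) eˣ Q = (1+u)^(-2/3)`,
so `P = 2 ((1+u)^(-2/3) - (1+u)⁻¹)`. This difference is nonnegative, at most `u ≤ e^(-2x)` for
`x ≥ 0` (both terms lie in `[1-u, 1]`), and at most `u^(-2/3) = e^(2x)` for `x < 0`.
-/

open Real

lemma one_add_exp_neg_two_mul (t : ℝ) : 1 + exp (-(2 * t)) = 2 * cosh t * exp (-t) := by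
  rw [cosh_eq, show -(2 * t) = -t + -t by ring, exp_add]
  ring_nf
  rw [← exp_add]
  simp

lemma one_add_tanh (t : ℝ) : 1 + tanh t = 2 * (1 + exp (-(2 * t)))⁻¹ := by
  rw [one_add_exp_neg_two_mul, tanh_eq_sinh_div_cosh, sinh_eq, cosh_eq, exp_neg]
  have := exp_pos t
  field_simp
  ring

lemma Q_pos (x : ℝ) : 0 < Q x := by
  unfold Q
  positivity

lemma hasDerivAt_Q (x : ℝ) : HasDerivAt Q (-tanh (3 * x / 2) * Q x) x := by
  have hc : 0 < cosh (3 * x / 2) := cosh_pos _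
  have hlin : HasDerivAt (fun x : ℝ => 3 * x / 2) (3 / 2) x := by
    simpa using ((hasDerivAt_id x).const_mul (3 : ℝ)).div_const 2
  have h : HasDerivAt Q _ x := (((hasDerivAt_cosh _).comp x hlin).rpow_const
    (p := -(2:ℝ)/3) (Or.inl hc.ne')).const_mul ((5/2 : ℝ) ^ ((1:ℝ)/3))
  refine h.congr_deriv ?_
  simp only [Function.comp_apply]
  rw [rpow_sub_one hc.ne', tanh_eq_sinh_div_cosh]
  unfold Q
  field_simp

lemma deriv_Q_div_Q (x : ℝ) : deriv Q x / Q x = -tanh (3 * x / 2) := by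
  rw [(hasDerivAt_Q x).deriv]
  field_simp [(Q_pos x).ne']

lemma rpow_const_mul_Q_eq (x : ℝ) :
    (10:ℝ) ^ (-(1:ℝ)/3) * exp x * Q x = (1 + exp (-(3 * x))) ^ (-(2:ℝ)/3) := by
  have hconst : (10:ℝ) ^ (-(1:ℝ)/3) * (5/2 : ℝ) ^ ((1:ℝ)/3) = 2 ^ (-(2:ℝ)/3) := by
    rw [show (-(1:ℝ)/3) = -((1:ℝ)/3) by ring, rpow_neg (by norm_num),
      ← inv_rpow (by norm_num), ← mul_rpow (by norm_num) (by norm_num),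
      show ((10:ℝ)⁻¹ * (5/2)) = 2 ^ (-2 : ℤ) by norm_num,
      ← rpow_intCast, ← rpow_mul (by norm_num)]
    norm_num
  have hexp : exp (-(3 * x / 2)) ^ (-(2:ℝ)/3) = exp x := by
    rw [← exp_mul]; congr 1; ring
  rw [show 3 * x = 2 * (3 * x / 2) by ring, one_add_exp_neg_two_mul,
    mul_rpow (by positivity) (exp_pos _).le, mul_rpow (by norm_num) (cosh_pos _).le, hexp,
    ← hconst]
  unfold Q
  ring_nf

lemma P_eq (x : ℝ) :
    P x = 2 * ((1 + exp (-(3 * x))) ^ (-(2:ℝ)/3) - (1 + exp (-(3 * x)))⁻¹) := by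
  have htanh := one_add_tanh (3 * x / 2)
  rw [show 2 * (3 * x / 2) = 3 * x by ring] at htanh
  have hQ := rpow_const_mul_Q_eq x
  simp only [P, deriv_Q_div_Q]
  linear_combination 2 * hQ - htanh

section

variable {u p : ℝ}

lemma inv_le_one_add_rpow (hu : 0 ≤ u) (hp : -1 ≤ p) : (1 + u)⁻¹ ≤ (1 + u) ^ p := by
  rw [← rpow_neg_one]
  exact rpow_le_rpow_of_exponent_le (by linarith) hp

lemma one_add_rpow_sub_inv_le_self (hu : 0 ≤ u) (hp : p ≤ 0) : (1 + u) ^ p - (1 + u)⁻¹ ≤ u := by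
  have h1 : (1 + u) ^ p ≤ 1 := rpow_le_one_of_one_le_of_nonpos (by linarith) hp
  have h2 : 1 - u ≤ (1 + u)⁻¹ := by
    rw [← one_div, le_div_iff₀ (by linarith)]
    nlinarith
  linarith

lemma one_add_rpow_sub_inv_le_rpow (hu : 0 < u) (hp : p ≤ 0) :
    (1 + u) ^ p - (1 + u)⁻¹ ≤ u ^ p := by
  have := rpow_le_rpow_of_nonpos hu (by linarith : u ≤ 1 + u) hp
  have : 0 ≤ (1 + u)⁻¹ := by positivity
  linarith

end

theorem P_decay : ∃ C : ℝ, 0 < C ∧ ∀ x : ℝ, |P x| ≤ C * Real.exp (-2 * |x|) := by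
  refine ⟨2, two_pos, fun x => ?_⟩
  have hu : 0 < exp (-(3 * x)) := exp_pos _
  rw [P_eq, abs_of_nonneg (by linarith [inv_le_one_add_rpow hu.le (by norm_num : -1 ≤ -(2:ℝ)/3)])]
  gcongr
  rcases le_or_gt 0 x with hx | hx
  · calc _ ≤ exp (-(3 * x)) := one_add_rpow_sub_inv_le_self hu.le (by norm_num)
      _ ≤ exp (-2 * |x|) := by rw [abs_of_nonneg hx]; gcongr; linarith
  · calc _ ≤ exp (-(3 * x)) ^ (-(2:ℝ)/3) := one_add_rpow_sub_inv_le_rpow hu (by norm_num)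
      _ = exp (-2 * |x|) := by rw [← exp_mul, abs_of_neg hx]; congr 1; ring
end
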